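/- For every 1 ≤ p ≤ ∞, t(ℓ_1 ⊕_p ℓ_1) = 2, where ℓ_1 denotes the Banach space of absolutely summable real sequences with the norm ‖x‖ = Σ_n |x_n|. -/

import Mathlib

open ENNReal

/-- The thinness index `t(X)` of a normed space. -/
noncomputable def thinness (X : Type*) [NormedAddCommGroup X] : ℝ :=
  sInf {r : ℝ | 0 < r ∧ ∀ (n : ℕ) (x : Fin n → X), (∀ i, ‖x i‖ = 1) →
    ∀ ε : ℝ, 0 < ε → ∃ y : X, ‖y‖ = 1 ∧ ∀ i, ‖x i - y‖ < r + ε}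

/-- The space `ℓ₁` of absolutely summable real sequences. -/
noncomputable abbrev ellOne : Type := lp (fun _ : ℕ => ℝ) 1

/-!
In `ℓ₁`, among any `n` coordinates some `|u i|` is at most `‖u‖ / n`, and then
`‖a • e i - u‖ ≥ a + (1 - 2 / n) * ‖u‖`: the basis vector `e i` is almost disjointly supported
from `u`. In `ℓ₁ ⊕_p ℓ₁` the finitely many unit vectors `(A • e i, B • e j)`, with `(A, B)` in a
fine net of the nonnegative part of the unit sphere of `ℝ ⊕_p ℝ`, play the same role: take
`(A, B)` close to the direction of `(‖u₁‖, ‖u₂‖)`. Hence every point of the unit sphere is at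
distance almost `2` from one of finitely many unit vectors, which forces `t = 2`.
-/

namespace lp

variable {ι : Type*} {E : ι → Type*} [∀ i, NormedAddCommGroup (E i)]

theorem norm_eq_norm_apply_add_norm_sub_single [DecidableEq ι] (f : lp E 1) (i : ι) :
    ‖f‖ = ‖f i‖ + ‖f - lp.single 1 i (f i)‖ := by
  have h := lp.norm_sub_norm_compl_sub_single (p := 1) (by norm_num) f {i}
  simp only [toReal_one, Real.rpow_one, Finset.sum_singleton] at h
  linarith

theorem norm_add_norm_sub_two_mul_norm_apply_le [DecidableEq ι] (f : lp E 1) (i : ι) (a : E i) :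
    ‖a‖ + ‖f‖ - 2 * ‖f i‖ ≤ ‖lp.single 1 i a - f‖ := by
  have hsplit := norm_eq_norm_apply_add_norm_sub_single (lp.single 1 i a - f) i
  have hrest : lp.single 1 i a - f - lp.single 1 i ((lp.single 1 i a - f) i) =
      -(f - lp.single 1 i (f i)) := by
    rw [coeFn_sub, Pi.sub_apply, lp.single_apply_self, lp.single_sub]
    abel
  rw [hrest, norm_neg, coeFn_sub, Pi.sub_apply, lp.single_apply_self] at hsplit
  linarith [norm_eq_norm_apply_add_norm_sub_single f i, norm_sub_norm_le a (f i)]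

theorem exists_mem_card_mul_norm_apply_le (f : lp E 1) {s : Finset ι} (hs : s.Nonempty) :
    ∃ i ∈ s, s.card * ‖f i‖ ≤ ‖f‖ := by
  refine Finset.exists_le_of_sum_le hs ?_
  have h := lp.sum_rpow_le_norm_rpow (p := 1) (by norm_num) f s
  simp only [toReal_one, Real.rpow_one] at h
  rw [← Finset.mul_sum, Finset.sum_const, nsmul_eq_mul]
  gcongr

end lp

/-- Every `u` is almost `ℓ₁`-disjoint from one of finitely many unit vectors `d`, in the sense
that `‖a • d - u‖` is almost `a + ‖u‖` for all `a ≥ 0`. -/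
def HasAlmostL1Directions (X : Type*) [NormedAddCommGroup X] [NormedSpace ℝ X] : Prop :=
  ∀ δ : ℝ, 0 ≤ δ → δ < 1 → ∃ D : Finset X, (∀ d ∈ D, ‖d‖ = 1) ∧
    ∀ u : X, ∃ d ∈ D, ∀ a : ℝ, 0 ≤ a → δ * (a + ‖u‖) ≤ ‖a • d - u‖

theorem hasAlmostL1Directions_lp_one {ι : Type*} [Infinite ι] :
    HasAlmostL1Directions (lp (fun _ : ι => ℝ) 1) := by
  classical
  intro δ _ hδ
  have hδ' : 0 < 1 - δ := sub_pos.2 hδ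
  obtain ⟨n, hn⟩ := exists_nat_gt (2 / (1 - δ))
  have hn0 : 0 < n := Nat.cast_pos.1 ((div_pos two_pos hδ').trans hn)
  rw [div_lt_iff₀ hδ'] at hn
  obtain ⟨s, rfl⟩ := Infinite.exists_subset_card_eq ι n
  refine ⟨s.image fun i => lp.single 1 i 1, by simp, fun u => ?_⟩
  obtain ⟨i, hi, hui⟩ := lp.exists_mem_card_mul_norm_apply_le u (Finset.card_pos.1 hn0)
  refine ⟨_, Finset.mem_image_of_mem _ hi, fun a ha => ?_⟩
  have key := lp.norm_add_norm_sub_two_mul_norm_apply_le u i a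
  rw [Real.norm_of_nonneg ha] at key
  rw [← lp.single_smul, smul_eq_mul, mul_one]
  nlinarith [mul_le_mul_of_nonneg_left hui hδ'.le, norm_nonneg (u i), mul_nonneg ha hδ'.le]

namespace WithLp

variable (p : ℝ≥0∞) [Fact (1 ≤ p)]

theorem prod_norm_eq_norm_toLp_norm {X Y : Type*} [NormedAddCommGroup X] [NormedAddCommGroup Y]
    (z : WithLp p (X × Y)) : ‖z‖ = ‖toLp p (‖z.fst‖, ‖z.snd‖)‖ := by
  rcases eq_or_ne p ∞ with rfl | hp
  · simp [prod_norm_eq_sup]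
  · have hp0 : 0 < p.toReal := toReal_pos (zero_lt_one.trans_le Fact.out).ne' hp
    simp [prod_norm_eq_add hp0]

theorem prod_norm_toLp_smul_smul {X Y : Type*} [NormedAddCommGroup X] [NormedSpace ℝ X]
    [NormedAddCommGroup Y] [NormedSpace ℝ Y] (w : WithLp p (ℝ × ℝ)) {x : X} {y : Y}
    (hx : ‖x‖ = 1) (hy : ‖y‖ = 1) : ‖toLp p (w.fst • x, w.snd • y)‖ = ‖w‖ := by
  rw [prod_norm_eq_norm_toLp_norm, prod_norm_eq_norm_toLp_norm p w]
  simp [norm_smul, hx, hy]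

theorem norm_toLp_le_norm_toLp {a b c d : ℝ} (ha : 0 ≤ a) (hac : a ≤ c) (hb : 0 ≤ b) (hbd : b ≤ d) :
    ‖toLp p (a, b)‖ ≤ ‖toLp p (c, d)‖ := by
  have habs : ∀ {s t : ℝ}, 0 ≤ s → s ≤ t → ‖s‖ ≤ ‖t‖ := fun hs hst => by
    rw [Real.norm_of_nonneg hs, Real.norm_of_nonneg (hs.trans hst)]; exact hst
  rcases eq_or_ne p ∞ with rfl | hp
  · simp only [prod_norm_eq_sup, toLp_fst, toLp_snd]
    exact sup_le_sup (habs ha hac) (habs hb hbd)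
  · have hp0 : 0 < p.toReal := toReal_pos (zero_lt_one.trans_le Fact.out).ne' hp
    simp only [prod_norm_eq_add hp0, toLp_fst, toLp_snd]
    gcongr
    exacts [habs ha hac, habs hb hbd]

end WithLp

open WithLp

section

variable (p : ℝ≥0∞) [Fact (1 ≤ p)]

def unitQuadrant : Set (WithLp p (ℝ × ℝ)) :=
  Metric.sphere 0 1 ∩ {v | 0 ≤ v.fst ∧ 0 ≤ v.snd}

theorem isCompact_unitQuadrant : IsCompact (unitQuadrant p) :=
  (isCompact_sphere 0 1).inter_right <|
    (isClosed_le continuous_const (WithLp.continuous_fst ..)).inter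
      (isClosed_le continuous_const (WithLp.continuous_snd ..))

theorem exists_mem_unitQuadrant_eq_norm_smul {z : WithLp p (ℝ × ℝ)} (h1 : 0 ≤ z.fst)
    (h2 : 0 ≤ z.snd) : ∃ v ∈ unitQuadrant p, z = ‖z‖ • v := by
  rcases eq_or_ne z 0 with rfl | hz
  · exact ⟨toLp p (1, 0), ⟨by simp, by simp⟩, by simp⟩
  · have hz' : ‖z‖ ≠ 0 := norm_ne_zero_iff.2 hz
    refine ⟨‖z‖⁻¹ • z, ⟨?_, ?_, ?_⟩, ?_⟩
    · simp [norm_smul, hz']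
    · simpa using mul_nonneg (inv_nonneg.2 (norm_nonneg z)) h1
    · simpa using mul_nonneg (inv_nonneg.2 (norm_nonneg z)) h2
    · rw [smul_smul, mul_inv_cancel₀ hz', one_smul]

theorem exists_finset_unitQuadrant_approx {c : ℝ} (hc : c < 1) :
    ∃ N : Finset (WithLp p (ℝ × ℝ)), (∀ w ∈ N, w ∈ unitQuadrant p) ∧
      ∀ z : WithLp p (ℝ × ℝ), 0 ≤ z.fst → 0 ≤ z.snd →
        ∃ w ∈ N, ∀ a : ℝ, 0 ≤ a → c * (a + ‖z‖) ≤ ‖a • w + z‖ := by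
  obtain ⟨N, hNK, hcover⟩ := (isCompact_unitQuadrant p).elim_nhds_subcover
    (fun v => Metric.ball v (1 - c)) (fun v _ => Metric.ball_mem_nhds v (sub_pos.2 hc))
  refine ⟨N, hNK, fun z h1 h2 => ?_⟩
  obtain ⟨v, hv, hzv⟩ := exists_mem_unitQuadrant_eq_norm_smul p h1 h2
  obtain ⟨w, hw, hvw⟩ := Set.mem_iUnion₂.1 (hcover hv)
  refine ⟨w, hw, fun a ha => ?_⟩
  have hv1 : ‖v‖ = 1 := mem_sphere_zero_iff_norm.1 hv.1
  have hvw' : ‖v - w‖ < 1 - c := by rwa [Metric.mem_ball, dist_eq_norm] at hvw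
  calc c * (a + ‖z‖)
      ≤ a + ‖z‖ - a * ‖v - w‖ := by nlinarith [norm_nonneg z]
    _ = ‖(a + ‖z‖) • v‖ - ‖a • (v - w)‖ := by
        rw [norm_smul, norm_smul, hv1, Real.norm_of_nonneg (by positivity),
          Real.norm_of_nonneg ha, mul_one]
    _ ≤ ‖(a + ‖z‖) • v - a • (v - w)‖ := norm_sub_norm_le _ _
    _ = ‖a • w + z‖ := by
        congr 1
        rw [hzv, norm_smul, norm_norm, hv1, mul_one]
        module

variable {p} in
theorem HasAlmostL1Directions.withLp_prod {X Y : Type*} [NormedAddCommGroup X] [NormedSpace ℝ X]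
    [NormedAddCommGroup Y] [NormedSpace ℝ Y] (hX : HasAlmostL1Directions X)
    (hY : HasAlmostL1Directions Y) : HasAlmostL1Directions (WithLp p (X × Y)) := by
  classical
  intro δ hδ0 hδ1
  obtain ⟨δ₁, hδ₁0, hδ₁1, hδδ₁⟩ : ∃ δ₁ : ℝ, 0 ≤ δ₁ ∧ δ₁ < 1 ∧ δ ≤ δ₁ * δ₁ :=
    ⟨(1 + δ) / 2, by positivity, by linarith, by nlinarith⟩
  obtain ⟨DX, hDX, hX⟩ := hX δ₁ hδ₁0 hδ₁1
  obtain ⟨DY, hDY, hY⟩ := hY δ₁ hδ₁0 hδ₁1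
  obtain ⟨N, hN, hNapprox⟩ := exists_finset_unitQuadrant_approx p hδ₁1
  refine ⟨(N ×ˢ DX ×ˢ DY).image fun t => toLp p (t.1.fst • t.2.1, t.1.snd • t.2.2), ?_,
    fun u => ?_⟩
  · simp only [Finset.mem_image, Finset.mem_product]
    rintro _ ⟨⟨w, d₁, d₂⟩, ⟨hw, hd₁, hd₂⟩, rfl⟩
    rw [prod_norm_toLp_smul_smul p w (hDX d₁ hd₁) (hDY d₂ hd₂)]
    exact mem_sphere_zero_iff_norm.1 (hN w hw).1
  obtain ⟨d₁, hd₁, hu₁⟩ := hX u.fst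
  obtain ⟨d₂, hd₂, hu₂⟩ := hY u.snd
  obtain ⟨w, hw, hwu⟩ := hNapprox (toLp p (‖u.fst‖, ‖u.snd‖)) (norm_nonneg _) (norm_nonneg _)
  refine ⟨_, Finset.mem_image.2 ⟨(w, d₁, d₂), by simp [hw, hd₁, hd₂], rfl⟩, fun a ha => ?_⟩
  obtain ⟨-, hA, hB⟩ := hN w hw
  calc δ * (a + ‖u‖)
      ≤ δ₁ * (δ₁ * (a + ‖u‖)) := by nlinarith [norm_nonneg u]
    _ ≤ δ₁ * ‖a • w + toLp p (‖u.fst‖, ‖u.snd‖)‖ := by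
        rw [prod_norm_eq_norm_toLp_norm p u]
        gcongr
        exact hwu a ha
    _ = ‖δ₁ • (a • w + toLp p (‖u.fst‖, ‖u.snd‖))‖ := by
        rw [norm_smul, Real.norm_of_nonneg hδ₁0]
    _ = ‖toLp p (δ₁ * (a * w.fst + ‖u.fst‖), δ₁ * (a * w.snd + ‖u.snd‖))‖ := by
        congr 1
    _ ≤ ‖toLp p (‖(a * w.fst) • d₁ - u.fst‖, ‖(a * w.snd) • d₂ - u.snd‖)‖ :=
        norm_toLp_le_norm_toLp p (by positivity) (hu₁ _ (by positivity)) (by positivity)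
          (hu₂ _ (by positivity))
    _ = ‖a • toLp p (w.fst • d₁, w.snd • d₂) - u‖ := by
        rw [prod_norm_eq_norm_toLp_norm p (_ - u)]
        simp [mul_smul]

end

theorem HasAlmostL1Directions.thinness_eq_two {X : Type*} [NormedAddCommGroup X]
    [NormedSpace ℝ X] (hX : HasAlmostL1Directions X) : thinness X = 2 := by
  obtain ⟨e, he⟩ : ∃ e : X, ‖e‖ = 1 := by
    obtain ⟨D, hD, hDu⟩ := hX 0 le_rfl one_pos
    obtain ⟨d, hd, -⟩ := hDu 0
    exact ⟨d, hD d hd⟩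
  refine IsLeast.csInf_eq ⟨⟨two_pos, fun n x hx ε hε => ⟨e, he, fun i => ?_⟩⟩, ?_⟩
  · calc ‖x i - e‖ ≤ ‖x i‖ + ‖e‖ := norm_sub_le _ _
      _ < 2 + ε := by rw [hx i, he]; linarith
  rintro r ⟨hr0, hr⟩
  by_contra! hr2
  -- with these constants `r + ε = 2δ`, while the direction `d` chosen for `y` is `2δ`-far from it
  obtain ⟨D, hD, hDu⟩ := hX ((2 + r) / 4) (by positivity) (by linarith)
  obtain ⟨y, hy, hclose⟩ := hr D.card (fun i => D.equivFin.symm i)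
    (fun i => hD _ (D.equivFin.symm i).2) ((2 - r) / 2) (by linarith)
  obtain ⟨d, hd, hfar⟩ := hDu y
  have hnear := hclose (D.equivFin ⟨d, hd⟩)
  have hfar' := hfar 1 zero_le_one
  simp only [Equiv.symm_apply_apply, one_smul, hy] at hnear hfar'
  linarith

theorem thinness_ellOne_prodLp_ellOne (p : ℝ≥0∞) [Fact (1 ≤ p)] :
    thinness (WithLp p (ellOne × ellOne)) = 2 :=
  (hasAlmostL1Directions_lp_one.withLp_prod hasAlmostL1Directions_lp_one).thinness_eq_two
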